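/- Let Λ be a zero/one-weighted graph. Then every reduced cycle in Λ has weight at least 2 if and only if the following two conditions hold: (i) Λ_0 is a forest, and (ii) no edge of weight 1 has both of its endpoints in a single connected component of Λ_0. (This is the link-level content, at each vertex, of the equivalence between the coloring test and its reformulation for zero/one-angled 2-complexes.) -/

import Mathlib

/-- A combinatorial graph (Serre style): edges come with a fixed-point-free
reversal involution; loops and multiple edges are allowed. -/
structure SGraph where
  V : Type
  E : Type
  init : E → V
  bar : E → E
  bar_bar : ∀ e, bar (bar e) = e
  bar_ne : ∀ e, bar e ≠ e

namespace SGraph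

variable (G : SGraph)

/-- Terminal vertex of an edge. -/
def term (e : G.E) : G.V := G.init (G.bar e)

/-- Consecutive edges of the list match up. -/
def IsChain (l : List G.E) : Prop :=
  List.Chain' (fun e f => G.term e = G.init f) l

/-- A cycle: a nonempty closed edge path. -/
def IsCycle (l : List G.E) : Prop :=
  l ≠ [] ∧ G.IsChain l ∧
    ∀ e f, l.head? = some e → l.getLast? = some f → G.term f = G.init e

/-- A reduced cycle: no edge is followed (cyclically) by its reverse. -/
def IsReducedCycle (l : List G.E) : Prop :=
  G.IsCycle l ∧ List.Chain' (fun e f => f ≠ G.bar e) l ∧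
    ∀ e f, l.head? = some e → l.getLast? = some f → e ≠ G.bar f

/-- A graph is a forest if it contains no reduced cycle. -/
def IsForestGraph : Prop := ∀ l, ¬ G.IsReducedCycle l

/-- A subgraph: a set of vertices and a set of edges, closed under reversal,
with endpoints among the chosen vertices. -/
structure Subgraph (G : SGraph) where
  verts : Set G.V
  edges : Set G.E
  bar_mem : ∀ ⦃e⦄, e ∈ edges → G.bar e ∈ edges
  init_mem : ∀ ⦃e⦄, e ∈ edges → G.init e ∈ verts

variable {G}

namespace Subgraph

/-- Subgraph containment. -/
def le (H K : Subgraph G) : Prop := H.verts ⊆ K.verts ∧ H.edges ⊆ K.edges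

/-- Intersection of two subgraphs. -/
def inter (H K : Subgraph G) : Subgraph G where
  verts := H.verts ∩ K.verts
  edges := H.edges ∩ K.edges
  bar_mem := fun _ he => ⟨H.bar_mem he.1, K.bar_mem he.2⟩
  init_mem := fun _ he => ⟨H.init_mem he.1, K.init_mem he.2⟩

/-- All edges of the list lie in the subgraph. -/
def EdgesIn (H : Subgraph G) (l : List G.E) : Prop := ∀ e ∈ l, e ∈ H.edges

/-- A reduced cycle contained in the subgraph. -/
def IsReducedCycleIn (H : Subgraph G) (l : List G.E) : Prop :=
  G.IsReducedCycle l ∧ H.EdgesIn l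

/-- A subgraph is a forest if it contains no reduced cycle. -/
def IsForest (H : Subgraph G) : Prop := ∀ l, ¬ H.IsReducedCycleIn l

/-- Reachability inside a subgraph by edge paths. -/
inductive Reaches (H : Subgraph G) : G.V → G.V → Prop
  | refl (v : G.V) (hv : v ∈ H.verts) : Reaches H v v
  | step (e : G.E) (he : e ∈ H.edges) {q : G.V} (h : Reaches H (G.term e) q) :
      Reaches H (G.init e) q

/-- A subgraph is connected if it is nonempty and any two of its vertices are
joined by an edge path in it. -/
def Connected (H : Subgraph G) : Prop :=
  H.verts.Nonempty ∧ ∀ p ∈ H.verts, ∀ q ∈ H.verts, H.Reaches p q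

/-- A tree is a connected forest. -/
def IsTree (H : Subgraph G) : Prop := H.IsForest ∧ H.Connected

/-- `C` is a connected component of `H`: its vertices form a reachability class
of `H` and its edges are the induced ones. -/
def IsCompOf (C H : Subgraph G) : Prop :=
  ∃ v ∈ H.verts, C.verts = {w | H.Reaches v w} ∧
    C.edges = {e | e ∈ H.edges ∧ G.init e ∈ C.verts}

/-- `H` is a forest relative to `H'`: every reduced cycle of `H` is contained
in `H'`. -/
def ForestRel (H H' : Subgraph G) : Prop :=
  ∀ l, H.IsReducedCycleIn l → H'.EdgesIn l

/-- `H` is a strong forest relative to `H'`: a relative forest such that each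
component of `H` meets `H'` in an empty or connected subgraph. -/
def StrongForestRel (H H' : Subgraph G) : Prop :=
  H.ForestRel H' ∧
    ∀ C : Subgraph G, C.IsCompOf H → (C.inter H').verts = ∅ ∨ (C.inter H').Connected

/-- Euler characteristic: number of vertices minus number of (geometric)
edges; each geometric edge corresponds to a pair `{e, ē}`. -/
noncomputable def eulerChar (H : Subgraph G) : ℤ :=
  (H.verts.ncard : ℤ) - ((H.edges.ncard / 2 : ℕ) : ℤ)

/-- A walk in `H` from `p` to `q`, given as its list of traversed edges. -/
def IsWalk (H : Subgraph G) (p q : G.V) (l : List G.E) : Prop :=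
  H.EdgesIn l ∧ G.IsChain l ∧
    (∀ e, l.head? = some e → G.init e = p) ∧
    (∀ e, l.getLast? = some e → G.term e = q) ∧
    (l = [] → p = q ∧ p ∈ H.verts)

/-- The weight-0 subgraph of a zero/one-weighted subgraph: all of its vertices
together with its edges of weight 0. -/
def zeroSub (H : Subgraph G) (ω : G.E → ℕ) (hbar : ∀ e, ω (G.bar e) = ω e) :
    Subgraph G where
  verts := H.verts
  edges := {e | e ∈ H.edges ∧ ω e = 0}
  bar_mem := fun e he => ⟨H.bar_mem he.1, by rw [hbar]; exact he.2⟩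
  init_mem := fun _ he => H.init_mem he.1

end Subgraph

/-- The full subgraph of a graph. -/
def full (G : SGraph) : Subgraph G where
  verts := Set.univ
  edges := Set.univ
  bar_mem := fun _ _ => Set.mem_univ _
  init_mem := fun _ _ => Set.mem_univ _

open Classical in
/-- The quotient graph `G/H'` obtained by identifying the subgraph `H'` to a
single vertex `∗` (represented by `none`): its vertices are the vertices of
`G` not in `H'` together with `∗`; its edges are the edges of `G` not in `H'`,
with endpoints in `H'` replaced by `∗`. -/
noncomputable def quot (G : SGraph) (H' : Subgraph G) : SGraph where
  V := Option {v : G.V // v ∉ H'.verts}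
  E := {e : G.E // e ∉ H'.edges}
  init e := if h : G.init e.1 ∈ H'.verts then none else some ⟨G.init e.1, h⟩
  bar e := ⟨G.bar e.1, fun hc => e.2 (by simpa [G.bar_bar] using H'.bar_mem hc)⟩
  bar_bar e := Subtype.ext (G.bar_bar e.1)
  bar_ne e := fun hc => G.bar_ne e.1 (congrArg Subtype.val hc)

end SGraph

/-! A reduced cycle of weight `0` is a reduced cycle of `Λ₀`. A cycle of weight `1` is, up to
rotation, one edge `e` of positive weight followed by a path in `Λ₀` from the terminal to the
initial vertex of `e`, which then lie in one component of `Λ₀`. Conversely, such a path can be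
shortened to a reduced one, and closing it up with `e` keeps it reduced because neither `e` nor
`ē` lies in `Λ₀`. -/

namespace SGraph

variable {G : SGraph}

def IsReduced (l : List G.E) : Prop := l.IsChain (fun e f => f ≠ G.bar e)

lemma term_bar (e : G.E) : G.term (G.bar e) = G.init e := by
  simp [term, G.bar_bar]

lemma IsCycle.append_comm {a b : List G.E} (h : G.IsCycle (a ++ b)) : G.IsCycle (b ++ a) := by
  rcases eq_or_ne a [] with rfl | ha
  · simpa using h
  rcases eq_or_ne b [] with rfl | hb
  · simpa using h
  obtain ⟨-, hchain, hclose⟩ := h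
  obtain ⟨hca, hcb, hab⟩ := List.isChain_append.1 hchain
  refine ⟨by simp [hb], List.isChain_append.2 ⟨hcb, hca, fun x hx y hy => ?_⟩, fun x y hx hy => ?_⟩
  · exact hclose y x (by simpa [List.head?_append_of_ne_nil _ ha] using hy)
      (by simpa [List.getLast?_append_of_ne_nil _ hb] using hx)
  · exact hab y (by simpa [List.getLast?_append_of_ne_nil _ ha] using hy) x
      (by simpa [List.head?_append_of_ne_nil _ hb] using hx)

lemma IsCycle.exists_cons_perm {l : List G.E} {e : G.E} (h : G.IsCycle l) (he : e ∈ l) :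
    ∃ m, G.IsCycle (e :: m) ∧ l.Perm (e :: m) := by
  obtain ⟨a, b, rfl⟩ := List.append_of_mem he
  exact ⟨b ++ a, h.append_comm, List.perm_append_comm⟩

namespace Subgraph

variable {H : Subgraph G} {p q r : G.V}

lemma Reaches.mem_left (h : H.Reaches p q) : p ∈ H.verts := by
  cases h with
  | refl v hv => exact hv
  | step e he _ => exact H.init_mem he

lemma Reaches.trans (hpq : H.Reaches p q) (hqr : H.Reaches q r) : H.Reaches p r := by
  induction hpq with
  | refl v hv => exact hqr
  | step e he _ ih => exact .step e he (ih hqr)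

lemma Reaches.single {e : G.E} (he : e ∈ H.edges) : H.Reaches (G.init e) (G.term e) :=
  .step e he (.refl _ (H.init_mem (H.bar_mem he)))

lemma Reaches.symm (h : H.Reaches p q) : H.Reaches q p := by
  induction h with
  | refl v hv => exact .refl v hv
  | step e he _ ih => exact ih.trans (term_bar e ▸ .single (H.bar_mem he))

def componentOf (H : Subgraph G) (v : G.V) : Subgraph G where
  verts := {w | H.Reaches v w}
  edges := {e | e ∈ H.edges ∧ H.Reaches v (G.init e)}
  bar_mem := fun _ ⟨he, hv⟩ => ⟨H.bar_mem he, hv.trans (.single he)⟩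
  init_mem := fun _ he => he.2

lemma componentOf_isCompOf {v : G.V} (hv : v ∈ H.verts) : (H.componentOf v).IsCompOf H :=
  ⟨v, hv, rfl, rfl⟩

lemma exists_isCompOf_iff_reaches :
    (∃ C : Subgraph G, C.IsCompOf H ∧ p ∈ C.verts ∧ q ∈ C.verts) ↔ H.Reaches p q := by
  constructor
  · rintro ⟨C, ⟨v, -, hC, -⟩, hp, hq⟩
    rw [hC] at hp hq
    exact hp.symm.trans hq
  · intro h
    exact ⟨H.componentOf p, componentOf_isCompOf h.mem_left, .refl p h.mem_left, h⟩

lemma IsWalk.nil (hp : p ∈ H.verts) : H.IsWalk p p [] :=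
  ⟨by simp [EdgesIn], List.isChain_nil, by simp, by simp, fun _ => ⟨rfl, hp⟩⟩

lemma isWalk_cons_iff {e : G.E} {l : List G.E} :
    H.IsWalk p q (e :: l) ↔ G.init e = p ∧ e ∈ H.edges ∧ H.IsWalk (G.term e) q l := by
  constructor
  · rintro ⟨hE, hch, hhead, hlast, -⟩
    refine ⟨hhead e rfl, hE e (by simp), fun f hf => hE f (by simp [hf]), hch.tail,
      fun f hf => ((List.isChain_cons.1 hch).1 f hf).symm, fun f hf => hlast f ?_, ?_⟩
    · cases l with
      | nil => simp at hf
      | cons g t => simpa [List.getLast?_cons_cons] using hf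
    · rintro rfl
      exact ⟨hlast e rfl, H.init_mem (H.bar_mem (hE e (by simp)))⟩
  · rintro ⟨rfl, he, hE, hch, hhead, hlast, hnil⟩
    refine ⟨fun f hf => ?_, List.isChain_cons.2 ⟨fun f hf => (hhead f hf).symm, hch⟩,
      by simp, fun f hf => ?_, by simp⟩
    · rcases List.mem_cons.1 hf with rfl | hf
      · exact he
      · exact hE f hf
    · cases l with
      | nil => cases hf; exact (hnil rfl).1
      | cons g t => exact hlast f (by simpa [List.getLast?_cons_cons] using hf)

lemma IsWalk.reaches {l : List G.E} (h : H.IsWalk p q l) : H.Reaches p q := by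
  induction l generalizing p with
  | nil =>
    obtain ⟨rfl, hp⟩ := h.2.2.2.2 rfl
    exact .refl p hp
  | cons e l ih =>
    obtain ⟨rfl, he, hl⟩ := isWalk_cons_iff.1 h
    exact .step e he (ih hl)

lemma Reaches.exists_isWalk_isReduced (h : H.Reaches p q) :
    ∃ l, H.IsWalk p q l ∧ G.IsReduced l := by
  induction h with
  | refl v hv => exact ⟨[], .nil hv, List.isChain_nil⟩
  | step e he _ ih =>
    obtain ⟨l, hw, hred⟩ := ih
    match l with
    | [] => exact ⟨[e], isWalk_cons_iff.2 ⟨rfl, he, hw⟩, List.isChain_singleton e⟩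
    | f :: t =>
      by_cases hf : f = G.bar e
      · subst hf
        obtain ⟨-, -, ht⟩ := isWalk_cons_iff.1 hw
        exact ⟨t, term_bar e ▸ ht, hred.tail⟩
      · exact ⟨e :: f :: t, isWalk_cons_iff.2 ⟨rfl, he, hw⟩,
          List.isChain_cons_cons.2 ⟨hf, hred⟩⟩

lemma isWalk_of_isCycle_cons {e : G.E} {m : List G.E} (h : G.IsCycle (e :: m))
    (hm : H.EdgesIn m) (he : G.init e ∈ H.verts) : H.IsWalk (G.term e) (G.init e) m := by
  obtain ⟨-, hch, hclose⟩ := h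
  refine ⟨hm, hch.tail, fun f hf => ((List.isChain_cons.1 hch).1 f hf).symm, fun f hf => ?_, ?_⟩
  · cases m with
    | nil => simp at hf
    | cons g t => exact hclose e f rfl (by simpa [List.getLast?_cons_cons] using hf)
  · rintro rfl
    obtain heq := hclose e e rfl rfl
    exact ⟨heq, heq ▸ he⟩

lemma IsWalk.isReducedCycle_cons {e : G.E} {l : List G.E} (he : e ∉ H.edges)
    (hw : H.IsWalk (G.term e) (G.init e) l) (hred : G.IsReduced l) :
    G.IsReducedCycle (e :: l) := by
  have hbar : G.bar e ∉ H.edges := fun h => he (by simpa [G.bar_bar] using H.bar_mem h)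
  obtain ⟨hE, hch, hhead, hlast, hnil⟩ := hw
  cases l with
  | nil =>
    refine ⟨⟨by simp, List.isChain_singleton e, ?_⟩, List.isChain_singleton e, ?_⟩
    · rintro _ _ ⟨⟩ ⟨⟩
      exact (hnil rfl).1
    · rintro _ _ ⟨⟩ ⟨⟩
      exact (G.bar_ne e).symm
  | cons f t =>
    have hf : f ∈ H.edges := hE f (by simp)
    have hlast' : ∀ g, (e :: f :: t).getLast? = some g → g ∈ H.edges ∧ G.term g = G.init e :=
      fun g hg => by
        rw [List.getLast?_cons_cons] at hg
        exact ⟨hE g (List.mem_of_getLast? hg), hlast g hg⟩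
    refine ⟨⟨by simp, List.isChain_cons_cons.2 ⟨(hhead f rfl).symm, hch⟩, ?_⟩,
      List.isChain_cons_cons.2 ⟨fun h => hbar (h ▸ hf), hred⟩, ?_⟩
    · rintro _ g ⟨⟩ hg
      exact (hlast' g hg).2
    · rintro _ g ⟨⟩ hg h
      exact he (h ▸ H.bar_mem (hlast' g hg).1)

end Subgraph

lemma edgesIn_full_zeroSub_iff {ω : G.E → ℕ} {hbar : ∀ e, ω (G.bar e) = ω e} {l : List G.E} :
    (G.full.zeroSub ω hbar).EdgesIn l ↔ (l.map ω).sum = 0 := by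
  simp [Subgraph.EdgesIn, Subgraph.zeroSub, full, List.sum_eq_zero_iff]

end SGraph

theorem coloring_test_link_equiv_general
    (G : SGraph)
    (ω : G.E → ℕ)
    (hbar : ∀ e, ω (G.bar e) = ω e) :
    (∀ l, G.IsReducedCycle l → 2 ≤ (l.map ω).sum) ↔
      ((G.full.zeroSub ω hbar).IsForest ∧
        ∀ e : G.E, ω e = 1 →
          ¬ ∃ C : SGraph.Subgraph G, C.IsCompOf (G.full.zeroSub ω hbar) ∧
              G.init e ∈ C.verts ∧ G.term e ∈ C.verts) := by
  simp only [SGraph.Subgraph.exists_isCompOf_iff_reaches]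
  constructor
  · intro h
    refine ⟨fun l ⟨hl, hzero⟩ => ?_, fun e he hreach => ?_⟩
    · have := h l hl
      rw [SGraph.edgesIn_full_zeroSub_iff] at hzero
      omega
    · obtain ⟨p, hp, hred⟩ := hreach.symm.exists_isWalk_isReduced
      have := h _ (hp.isReducedCycle_cons (fun h => by simp [h.2] at he) hred)
      simp [SGraph.edgesIn_full_zeroSub_iff.1 hp.1, he] at this
  · rintro ⟨hforest, hsep⟩ l hl
    by_contra! hlt
    obtain ⟨e, he, hωe⟩ : ∃ e ∈ l, ω e ≠ 0 := by
      by_contra! hzero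
      exact hforest l ⟨hl, fun f hf => ⟨Set.mem_univ f, hzero f hf⟩⟩
    obtain ⟨m, hcyc, hperm⟩ := hl.1.exists_cons_perm he
    have hsum : ω e + (m.map ω).sum < 2 := by simpa [(hperm.map ω).sum_eq] using hlt
    have hm : (G.full.zeroSub ω hbar).EdgesIn m := SGraph.edgesIn_full_zeroSub_iff.2 (by omega)
    exact hsep e (by omega)
      (SGraph.Subgraph.isWalk_of_isCycle_cons hcyc hm (Set.mem_univ _)).reaches.symm

/-- In a zero/one-weighted graph, every reduced cycle has weight
at least 2 if and only if (i) the weight-0 subgraph `Λ₀` is a forest and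
(ii) no edge of weight 1 has both of its endpoints in a single connected
component of `Λ₀`. -/
theorem coloring_test_link_equiv
    (G : SGraph) [Fintype G.V] [Fintype G.E]
    (ω : G.E → ℕ) (h01 : ∀ e, ω e = 0 ∨ ω e = 1)
    (hbar : ∀ e, ω (G.bar e) = ω e) :
    (∀ l, G.IsReducedCycle l → 2 ≤ (l.map ω).sum) ↔
      ((G.full.zeroSub ω hbar).IsForest ∧
        ∀ e : G.E, ω e = 1 →
          ¬ ∃ C : SGraph.Subgraph G, C.IsCompOf (G.full.zeroSub ω hbar) ∧
              G.init e ∈ C.verts ∧ G.term e ∈ C.verts) :=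
  coloring_test_link_equiv_general G ω hbar
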